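/- arXiv:2509.24193 — 3 statements merged into one kernel-verified Lean document; each statement's English description precedes it below -/
import Mathlib

section
/- Let L(·|θ) be a family of objective functions and M(θ) = argmax_{θ'} L(θ'|θ). Suppose L(·|θ*) is λ-strongly concave on a ball B(r,θ*), the family satisfies first-order stability with constant μ (i.e., ‖∇L(M(θ)|θ*) − ∇L(M(θ)|θ)‖ ≤ μ‖θ−θ*‖ for θ ∈ B(r,θ*)), θ* = M(θ*) (self-consistency), and 0 ≤ μ < λ. Then for all θ ∈ B(r,θ*): ‖M(θ) − θ*‖ ≤ (μ/λ)‖θ − θ*‖. -/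
/-!
Summing the strong-concavity inequality of `L(·|θ*)` in both directions makes `-∇L(·|θ*)`
`λ`-strongly monotone. Pairing it with the optimality conditions of `θ* = M(θ*)` and of `M(θ)`
gives `λ‖M(θ) - θ*‖² ≤ ⟪∇L(M(θ)|θ) - ∇L(M(θ)|θ*), M(θ) - θ*⟫`, and Cauchy–Schwarz together
with first-order stability bounds the right side by `μ‖θ - θ*‖‖M(θ) - θ*‖`.
-/

open scoped RealInnerProductSpace

section StronglyConcave

variable {E : Type*} [NormedAddCommGroup E] [InnerProductSpace ℝ E]

theorem inner_sub_le_of_stronglyConcave {f : E → ℝ} {g : E → E} {s : Set E} {lam : ℝ}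
    (hf : ∀ x ∈ s, ∀ y ∈ s, f x - f y - ⟪g y, x - y⟫ ≤ -(lam / 2) * ‖x - y‖ ^ 2)
    {x y : E} (hx : x ∈ s) (hy : y ∈ s) :
    ⟪g x - g y, x - y⟫ ≤ -lam * ‖x - y‖ ^ 2 := by
  have hxy := hf x hx y hy
  have hyx := hf y hy x hx
  rw [← neg_sub x y, inner_neg_right, norm_neg] at hyx
  rw [inner_sub_left]
  linarith

theorem mul_sq_norm_le_of_variational {u v w x y : E} {lam : ℝ}
    (hmono : ⟪u - v, x - y⟫ ≤ -lam * ‖x - y‖ ^ 2)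
    (hv : ⟪v, x - y⟫ ≤ 0) (hw : ⟪w, y - x⟫ ≤ 0) :
    lam * ‖x - y‖ ^ 2 ≤ ‖u - w‖ * ‖x - y‖ :=
  calc lam * ‖x - y‖ ^ 2 ≤ ⟪w - u, x - y⟫ := by
        rw [← neg_sub x y, inner_neg_right] at hw
        rw [inner_sub_left] at hmono ⊢
        linarith
    _ ≤ ‖w - u‖ * ‖x - y‖ := real_inner_le_norm _ _
    _ = ‖u - w‖ * ‖x - y‖ := by rw [norm_sub_rev]

end StronglyConcave

theorem le_div_of_mul_sq_le_mul {a c lam : ℝ} (hlam : 0 < lam) (hc : 0 ≤ c) (ha : 0 ≤ a)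
    (h : lam * a ^ 2 ≤ c * a) : a ≤ c / lam := by
  rw [le_div_iff₀ hlam]
  rcases ha.eq_or_lt with rfl | ha
  · simpa using hc
  · nlinarith

theorem em_population_contraction_general
    {d : ℕ}
    (L : EuclideanSpace ℝ (Fin d) → EuclideanSpace ℝ (Fin d) → ℝ)
    (gL : EuclideanSpace ℝ (Fin d) → EuclideanSpace ℝ (Fin d) → EuclideanSpace ℝ (Fin d))
    (M : EuclideanSpace ℝ (Fin d) → EuclideanSpace ℝ (Fin d))
    (θstar : EuclideanSpace ℝ (Fin d)) (r lam mu : ℝ)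
    (hmu : 0 ≤ mu) (hmulam : mu < lam)
    (hconc : ∀ θ₁ ∈ Metric.closedBall θstar r, ∀ θ₂ ∈ Metric.closedBall θstar r,
        L θ₁ θstar - L θ₂ θstar - ⟪gL θ₂ θstar, θ₁ - θ₂⟫
          ≤ -(lam / 2) * ‖θ₁ - θ₂‖ ^ 2)
    (hstab : ∀ θ ∈ Metric.closedBall θstar r,
        ‖gL (M θ) θstar - gL (M θ) θ‖ ≤ mu * ‖θ - θstar‖)
    (hself : M θstar = θstar)
    (hopt : ∀ θ θ' : EuclideanSpace ℝ (Fin d), ⟪gL (M θ) θ, θ' - M θ⟫ ≤ 0)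
    (hMball : ∀ θ ∈ Metric.closedBall θstar r, M θ ∈ Metric.closedBall θstar r) :
    ∀ θ ∈ Metric.closedBall θstar r,
      ‖M θ - θstar‖ ≤ (mu / lam) * ‖θ - θstar‖ := by
  intro θ hθ
  have hstar : θstar ∈ Metric.closedBall θstar r :=
    Metric.mem_closedBall_self (dist_nonneg.trans hθ)
  have hopt_star : ⟪gL θstar θstar, M θ - θstar⟫ ≤ 0 := by
    simpa only [hself] using hopt θstar (M θ)
  have key : lam * ‖M θ - θstar‖ ^ 2 ≤ ‖gL (M θ) θstar - gL (M θ) θ‖ * ‖M θ - θstar‖ :=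
    mul_sq_norm_le_of_variational
      (inner_sub_le_of_stronglyConcave hconc (hMball θ hθ) hstar) hopt_star (hopt θ θstar)
  rw [div_mul_eq_mul_div]
  exact le_div_of_mul_sq_le_mul (hmu.trans_lt hmulam) (by positivity) (norm_nonneg _)
    (key.trans (mul_le_mul_of_nonneg_right (hstab θ hθ) (norm_nonneg _)))

/-- Population EM contraction: under λ-strong concavity of `L(·|θ*)`,
first-order stability with constant `μ`, self-consistency `M(θ*) = θ*`,
and first-order optimality of the maximizers `M(θ)`, the operator `M` is
contractive on the ball `B(r,θ*)` with factor `μ/λ`. -/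
theorem em_population_contraction
    {d : ℕ}
    (L : EuclideanSpace ℝ (Fin d) → EuclideanSpace ℝ (Fin d) → ℝ)
    (gL : EuclideanSpace ℝ (Fin d) → EuclideanSpace ℝ (Fin d) → EuclideanSpace ℝ (Fin d))
    (M : EuclideanSpace ℝ (Fin d) → EuclideanSpace ℝ (Fin d))
    (θstar : EuclideanSpace ℝ (Fin d)) (r lam mu : ℝ)
    (hr : 0 < r) (hmu : 0 ≤ mu) (hmulam : mu < lam)
    (hconc : ∀ θ₁ ∈ Metric.closedBall θstar r, ∀ θ₂ ∈ Metric.closedBall θstar r,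
        L θ₁ θstar - L θ₂ θstar - ⟪gL θ₂ θstar, θ₁ - θ₂⟫
          ≤ -(lam / 2) * ‖θ₁ - θ₂‖ ^ 2)
    (hstab : ∀ θ ∈ Metric.closedBall θstar r,
        ‖gL (M θ) θstar - gL (M θ) θ‖ ≤ mu * ‖θ - θstar‖)
    (hself : M θstar = θstar)
    (hopt : ∀ θ θ' : EuclideanSpace ℝ (Fin d), ⟪gL (M θ) θ, θ' - M θ⟫ ≤ 0)
    (hMball : ∀ θ ∈ Metric.closedBall θstar r, M θ ∈ Metric.closedBall θstar r) :
    ∀ θ ∈ Metric.closedBall θstar r,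
      ‖M θ - θstar‖ ≤ (mu / lam) * ‖θ - θstar‖ :=
  em_population_contraction_general L gL M θstar r lam mu hmu hmulam hconc hstab hself hopt hMball
end

section
/- Uniform MLE consistency: suppose (i) sup over α₀ ∈ [c,∞) and γ ∈ Γ of |L_N(γ|α₀) − L(γ|α₀)| converges in probability to 0 as N → ∞, and (ii) for every ε > 0, sup over α₀ ∈ [c,∞) and over γ with ‖γ − γ*‖ ≥ ε of −(L(γ|α₀) − L(γ*|α₀)) is strictly negative. Then for any ε > 0 there exists N₁ such that for all N ≥ N₁ and all α₀ ∈ [c,∞), any minimizer γ̂_N of L_N(·|α₀) satisfies ℙ(‖γ̂_N − γ*‖ ≤ ε) ≥ 1 − ε/2. -/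
open MeasureTheory Filter

/-- Uniform MLE consistency: if the sample loss `L_N(γ|α₀)` converges to the
population loss `L(γ|α₀)` in probability uniformly over `γ ∈ Γ` and
`α₀ ∈ [c,∞)`, and the population loss separates `γ*` from parameters at
distance `≥ ε` uniformly in `α₀`, then for every `ε > 0` there exists `N₁`
such that for all `N ≥ N₁` and `α₀ ∈ [c,∞)`, any minimizer `γ̂_N` of
`L_N(·|α₀)` over `Γ` satisfies `ℙ(‖γ̂_N − γ*‖ ≤ ε) ≥ 1 − ε/2`. -/
theorem uniform_mle_consistency
    {k : ℕ} {Ω : Type*} [MeasurableSpace Ω]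
    (P : Measure Ω) [IsProbabilityMeasure P]
    (Γ : Set (EuclideanSpace ℝ (Fin k)))
    (γstar : EuclideanSpace ℝ (Fin k)) (hγstar : γstar ∈ Γ)
    (c : ℝ) (hc : 0 < c)
    (LN : ℕ → EuclideanSpace ℝ (Fin k) → ℝ → Ω → ℝ)
    (L : EuclideanSpace ℝ (Fin k) → ℝ → ℝ)
    (hUnif : ∀ η > (0 : ℝ),
      Tendsto (fun N => P {ω | ∃ α₀ ≥ c, ∃ γ ∈ Γ, η < |LN N γ α₀ ω - L γ α₀|})
        atTop (nhds 0))
    (hSep : ∀ ε > (0 : ℝ), ∃ η > (0 : ℝ), ∀ α₀ ≥ c, ∀ γ ∈ Γ,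
      ε ≤ ‖γ - γstar‖ → η ≤ L γ α₀ - L γstar α₀) :
    ∀ ε > (0 : ℝ), ∃ N₁ : ℕ, ∀ N ≥ N₁, ∀ α₀ ≥ c,
      ∀ ghat : Ω → EuclideanSpace ℝ (Fin k),
        (∀ ω, ghat ω ∈ Γ ∧ ∀ γ ∈ Γ, LN N (ghat ω) α₀ ω ≤ LN N γ α₀ ω) →
        P {ω | ‖ghat ω - γstar‖ ≤ ε} ≥ ENNReal.ofReal (1 - ε / 2) := by
  intro ε hε
  obtain ⟨η, hη, hsep⟩ := hSep ε hε
  have hη3 : (0:ℝ) < η / 3 := by linarith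
  have hT := hUnif (η/3) hη3
  have hpos : (0:ENNReal) < ENNReal.ofReal (ε/2) := by
    simp [ENNReal.ofReal_pos]; linarith
  have hev : ∀ᶠ N in atTop,
      P {ω | ∃ α₀ ≥ c, ∃ γ ∈ Γ, η/3 < |LN N γ α₀ ω - L γ α₀|}
        ≤ ENNReal.ofReal (ε/2) := by
    have := hT.eventually_le_const hpos
    exact this
  obtain ⟨N₁, hN₁⟩ := eventually_atTop.mp hev
  refine ⟨N₁, fun N hN α₀ hα₀ ghat hghat => ?_⟩
  set B := {ω | ∃ α₀ ≥ c, ∃ γ ∈ Γ, η/3 < |LN N γ α₀ ω - L γ α₀|}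
  have hBsub : Bᶜ ⊆ {ω | ‖ghat ω - γstar‖ ≤ ε} := by
    intro ω hω
    show ‖ghat ω - γstar‖ ≤ ε
    simp only [B, Set.mem_compl_iff, Set.mem_setOf_eq, not_exists, not_and, not_lt] at hω
    obtain ⟨hmem, hmin⟩ := hghat ω
    by_contra hcon
    push_neg at hcon
    have hd := hsep α₀ hα₀ (ghat ω) hmem (le_of_lt hcon)
    have h1 : |LN N (ghat ω) α₀ ω - L (ghat ω) α₀| ≤ η/3 := hω α₀ hα₀ (ghat ω) hmem
    have h2 : |LN N γstar α₀ ω - L γstar α₀| ≤ η/3 := hω α₀ hα₀ γstar hγstar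
    have h3 : LN N (ghat ω) α₀ ω ≤ LN N γstar α₀ ω := hmin γstar hγstar
    have ha := abs_le.mp h1
    have hb := abs_le.mp h2
    linarith [ha.1, ha.2, hb.1, hb.2]
  have hPB : P B ≤ ENNReal.ofReal (ε/2) := hN₁ N hN
  have hle : P Bᶜ ≤ P {ω | ‖ghat ω - γstar‖ ≤ ε} := measure_mono hBsub
  have huniv : (1:ENNReal) ≤ P B + P Bᶜ := by
    have : P Set.univ ≤ P (B ∪ Bᶜ) := by
      rw [Set.union_compl_self]
    calc (1:ENNReal) = P Set.univ := (measure_univ).symm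
      _ ≤ P (B ∪ Bᶜ) := this
      _ ≤ P B + P Bᶜ := measure_union_le _ _
  rcases le_or_gt (1 - ε/2) 0 with h0 | h0
  · calc ENNReal.ofReal (1 - ε/2) = 0 := by simp [ENNReal.ofReal_eq_zero.mpr h0]
      _ ≤ _ := by simp
  · have key : ENNReal.ofReal (1 - ε/2) + ENNReal.ofReal (ε/2) ≤ P Bᶜ + ENNReal.ofReal (ε/2) := by
      have : ENNReal.ofReal (1 - ε/2) + ENNReal.ofReal (ε/2) = 1 := by
        rw [← ENNReal.ofReal_add (le_of_lt h0) (by linarith)]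
        norm_num
      rw [this]
      calc (1:ENNReal) ≤ P B + P Bᶜ := huniv
        _ ≤ ENNReal.ofReal (ε/2) + P Bᶜ := add_le_add_left hPB _
        _ = P Bᶜ + ENNReal.ofReal (ε/2) := add_comm _ _
    have := ENNReal.add_le_add_iff_right (by simp) |>.mp key
    exact le_trans this hle
end

section
/- Full DPO convergence: under self-consistency, λ-strong concavity, first-order stability with μ < λ, the uniform sample deviation bound ‖M_N(θ)−M(θ)‖ ≤ ζ with probability 1−ε on B(r,θ*), the per-step DPO-EM equivalence ℙ(‖θ̂_{t,mDPO} − M_N(θ̂_{t−1,mDPO})‖ ≥ ε) < ε, and (ε + ζ) ≤ (1 − μ/λ)·r, the T-th DPO iterate satisfies ‖θ̂_{T,mDPO} − θ*‖ ≤ (μ/λ)^T·‖θ_ref − θ*‖ + (ε + ζ)/(1 − μ/λ) with probability at least 1 − (T+1)ε. -/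
open MeasureTheory

/-- Full DPO convergence: under self-consistency `M(θ*) = θ*`, the contraction
property of the population operator `M` with factor `μ/λ < 1` on `B(r,θ*)`
(derived from λ-strong concavity and first-order stability), a uniform sample
deviation bound `‖M_N(θ) − M(θ)‖ ≤ ζ` on `B(r,θ*)` holding with probability at
least `1 − ε`, the per-step DPO–EM equivalence
`ℙ(‖θ̂_t − M_N(θ̂_{t−1})‖ ≥ ε) < ε`, and `(ε + ζ) ≤ (1 − μ/λ) r`, the `T`-th DPO
iterate (initialized at `θ_ref ∈ B(r,θ*)`) satisfies
`‖θ̂_T − θ*‖ ≤ (μ/λ)^T ‖θ_ref − θ*‖ + (ε + ζ)/(1 − μ/λ)` with probability at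
least `1 − (T+1)ε`. -/
theorem dpo_convergence
    {d : ℕ} {Ω : Type*} [MeasurableSpace Ω]
    (P : Measure Ω) [IsProbabilityMeasure P]
    (M : EuclideanSpace ℝ (Fin d) → EuclideanSpace ℝ (Fin d))
    (MN : Ω → EuclideanSpace ℝ (Fin d) → EuclideanSpace ℝ (Fin d))
    (θstar θref : EuclideanSpace ℝ (Fin d))
    (θhat : ℕ → Ω → EuclideanSpace ℝ (Fin d))
    (mu lam r ε ζ : ℝ) (T : ℕ)
    (hmu : 0 ≤ mu) (hmulam : mu < lam) (hr : 0 < r)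
    (hε : 0 < ε) (hζ : 0 ≤ ζ)
    (hself : M θstar = θstar)
    (hcontract : ∀ θ ∈ Metric.closedBall θstar r,
        ‖M θ - θstar‖ ≤ (mu / lam) * ‖θ - θstar‖)
    (hdev : P {ω | ∀ θ ∈ Metric.closedBall θstar r, ‖MN ω θ - M θ‖ ≤ ζ}
        ≥ ENNReal.ofReal (1 - ε))
    (hinit : ∀ ω, θhat 0 ω = θref)
    (hrefball : θref ∈ Metric.closedBall θstar r)
    (hstep : ∀ t : ℕ,
        P {ω | ε ≤ ‖θhat (t + 1) ω - MN ω (θhat t ω)‖} < ENNReal.ofReal ε)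
    (hsum : ε + ζ ≤ (1 - mu / lam) * r) :
    P {ω | ‖θhat T ω - θstar‖
        ≤ (mu / lam) ^ T * ‖θref - θstar‖ + (ε + ζ) / (1 - mu / lam)}
      ≥ ENNReal.ofReal (1 - (T + 1) * ε) := by

  set κ := mu / lam with hκdef
  have hlam : 0 < lam := lt_of_le_of_lt hmu hmulam
  have hκ0 : 0 ≤ κ := div_nonneg hmu hlam.le
  have hκ1 : κ < 1 := (div_lt_one hlam).2 hmulam
  have h1κ : 0 < 1 - κ := by linarith
  set a := ‖θref - θstar‖ with hadef
  have ha : 0 ≤ a := norm_nonneg _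
  have har : a ≤ r := by
    have h := hrefball
    rwa [Metric.mem_closedBall, dist_eq_norm] at h
  set A := {ω | ∀ θ ∈ Metric.closedBall θstar r, ‖MN ω θ - M θ‖ ≤ ζ} with hAdef
  set B : ℕ → Set Ω := fun t => {ω | ‖θhat (t+1) ω - MN ω (θhat t ω)‖ < ε} with hBdef
  set G := A ∩ ⋂ t ∈ Finset.range T, B t with hGdef
  -- deterministic claim
  have key : ∀ ω ∈ G, ∀ t, t ≤ T →
      ‖θhat t ω - θstar‖ ≤ κ ^ t * a + (ε + ζ) * (1 - κ ^ t) / (1 - κ) := by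
    rintro ω ⟨hA, hB⟩ t
    induction t with
    | zero => intro _; simp [hinit ω, hadef]
    | succ t ih =>
      intro hle
      have ht : t ≤ T := Nat.le_of_succ_le hle
      have ihb := ih ht
      have hκt0 : 0 ≤ κ ^ t := pow_nonneg hκ0 t
      have hκt1 : κ ^ t ≤ 1 := pow_le_one₀ hκ0 hκ1.le
      have hball : θhat t ω ∈ Metric.closedBall θstar r := by
        rw [Metric.mem_closedBall, dist_eq_norm]
        refine ihb.trans ?_
        have h2 : (ε + ζ) * (1 - κ ^ t) / (1 - κ) ≤ r * (1 - κ ^ t) := by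
          rw [div_le_iff₀ h1κ]
          nlinarith
        nlinarith
      have hBt : ‖θhat (t+1) ω - MN ω (θhat t ω)‖ < ε := by
        have := Set.mem_iInter₂.1 hB t (Finset.mem_range.2 (Nat.lt_of_succ_le hle))
        exact this
      have hdevt : ‖MN ω (θhat t ω) - M (θhat t ω)‖ ≤ ζ := hA _ hball
      have hMt : ‖M (θhat t ω) - θstar‖ ≤ κ * ‖θhat t ω - θstar‖ :=
        hcontract _ hball
      have hsplit : θhat (t+1) ω - θstar =
          (θhat (t+1) ω - MN ω (θhat t ω)) + (MN ω (θhat t ω) - M (θhat t ω))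
            + (M (θhat t ω) - θstar) := by abel
      have tri : ‖θhat (t+1) ω - θstar‖ ≤ ‖θhat (t+1) ω - MN ω (θhat t ω)‖
          + ‖MN ω (θhat t ω) - M (θhat t ω)‖ + ‖M (θhat t ω) - θstar‖ := by
        rw [hsplit]
        exact (norm_add_le _ _).trans (add_le_add_left (norm_add_le _ _) _)
      have hM2 : ‖M (θhat t ω) - θstar‖
          ≤ κ * (κ ^ t * a + (ε + ζ) * (1 - κ ^ t) / (1 - κ)) :=
        hMt.trans (mul_le_mul_of_nonneg_left ihb hκ0)
      have hgeom : κ * ((ε + ζ) * (1 - κ ^ t) / (1 - κ)) + (ε + ζ)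
          = (ε + ζ) * (1 - κ ^ (t+1)) / (1 - κ) := by
        rw [pow_succ]
        field_simp
        ring
      have : ‖θhat (t+1) ω - θstar‖
          ≤ ε + ζ + κ * (κ ^ t * a + (ε + ζ) * (1 - κ ^ t) / (1 - κ)) := by
        linarith
      calc ‖θhat (t+1) ω - θstar‖
          ≤ ε + ζ + κ * (κ ^ t * a + (ε + ζ) * (1 - κ ^ t) / (1 - κ)) := this
        _ = κ ^ (t+1) * a + ((ε + ζ) * (1 - κ ^ (t+1)) / (1 - κ)) := by
            rw [← hgeom, pow_succ]; ring
        _ = κ ^ (t+1) * a + (ε + ζ) * (1 - κ ^ (t+1)) / (1 - κ) := rfl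
  -- G is contained in the target event
  have hGS : G ⊆ {ω | ‖θhat T ω - θstar‖
      ≤ κ ^ T * a + (ε + ζ) / (1 - κ)} := by
    intro ω hω
    have h1 := key ω hω T le_rfl
    have hκT0 : 0 ≤ κ ^ T := pow_nonneg hκ0 T
    have hκT1 : κ ^ T ≤ 1 := pow_le_one₀ hκ0 hκ1.le
    have h2 : (ε + ζ) * (1 - κ ^ T) / (1 - κ) ≤ (ε + ζ) / (1 - κ) := by
      rw [div_le_div_iff₀ h1κ h1κ]
      nlinarith [mul_nonneg (mul_nonneg (by linarith : (0:ℝ) ≤ ε + ζ) h1κ.le) hκT0]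
    exact h1.trans (by linarith)
  -- probability bound
  have hBc : ∀ t, (B t)ᶜ = {ω | ε ≤ ‖θhat (t+1) ω - MN ω (θhat t ω)‖} := by
    intro t; ext ω; simp [hBdef, not_lt]
  have hAsub : A ⊆ G ∪ ⋃ t ∈ Finset.range T, (B t)ᶜ := by
    intro ω hω
    by_cases h : ω ∈ ⋂ t ∈ Finset.range T, B t
    · exact Or.inl ⟨hω, h⟩
    · right
      simp only [Set.mem_iInter, not_forall] at h
      obtain ⟨t, ht, hnb⟩ := h
      exact Set.mem_biUnion ht hnb
  have hPA : P A ≤ P G + ∑ t ∈ Finset.range T, P ((B t)ᶜ) :=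
    (measure_mono hAsub).trans ((measure_union_le _ _).trans
      (add_le_add_right (measure_biUnion_finset_le _ _) _))
  have hsumB : ∑ t ∈ Finset.range T, P ((B t)ᶜ) ≤ ENNReal.ofReal (T * ε) := by
    have : ∀ t ∈ Finset.range T, P ((B t)ᶜ) ≤ ENNReal.ofReal ε := by
      intro t _
      rw [hBc t]
      exact (hstep t).le
    calc ∑ t ∈ Finset.range T, P ((B t)ᶜ)
        ≤ ∑ _t ∈ Finset.range T, ENNReal.ofReal ε := Finset.sum_le_sum this
      _ = T * ENNReal.ofReal ε := by
          rw [Finset.sum_const, Finset.card_range, nsmul_eq_mul]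
      _ = ENNReal.ofReal (T * ε) := by
          rw [ENNReal.ofReal_mul (by positivity), ENNReal.ofReal_natCast]
  have hPG : ENNReal.ofReal (1 - (T + 1) * ε) ≤ P G := by
    have h1 : ENNReal.ofReal (1 - ε) ≤ P G + ENNReal.ofReal (T * ε) :=
      le_trans hdev (hPA.trans (add_le_add_right hsumB _))
    have h2 : ENNReal.ofReal (1 - (T + 1) * ε)
        = ENNReal.ofReal (1 - ε) - ENNReal.ofReal (T * ε) := by
      rw [← ENNReal.ofReal_sub _ (by positivity)]
      congr 1
      push_cast
      ring
    rw [h2]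
    exact tsub_le_iff_right.2 h1
  exact le_trans hPG (measure_mono hGS)
end
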